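/- arXiv:1111.1558 — 5 statements merged into one kernel-verified Lean document; each statement's English description precedes it below -/
import Mathlib

section
/- Let H be a hypergraph on a finite vertex set V such that every vertex has degree at most Δ and every hyperedge contains at least δ vertices, where δ ≥ 2. Let k = ⌈2Δ/δ⌉ (the least natural number k with k·δ ≥ 2Δ). Then H admits a proper vertex coloring in k + 1 colors. -/
/-- A proper coloring of a hypergraph with hyperedge family `ℰ` in `m` colors:
every hyperedge contains two vertices of different colors. -/
def HypergraphProperColoring {V : Type*} (ℰ : Finset (Finset V)) (m : ℕ)
    (c : V → Fin m) : Prop :=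
  ∀ e ∈ ℰ, ∃ u ∈ e, ∃ w ∈ e, c u ≠ c w

/-- The degree of a vertex `v` in a hypergraph: the number of hyperedges containing `v`. -/
def hypDegree {V : Type*} [DecidableEq V] (ℰ : Finset (Finset V)) (v : V) : ℕ :=
  (ℰ.filter (fun e => v ∈ e)).card

/-!
Well-order `V`. Removing the least vertex of each edge leaves sets of size at least `δ - 1`, and
every vertex lies in at most `Δ ≤ k (δ - 1)` of them. By Hall's theorem applied to `k` copies of
each vertex, every edge `e` can therefore choose a vertex `f e` that is not its least one, with no
vertex chosen by more than `k` edges. Colouring greedily in increasing order, a vertex `v` only has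
to avoid the colours of the least vertices of the at most `k` edges that chose it, so one of `k + 1`
colours is free; each edge then gets different colours on `f e` and on its least vertex.
-/

open Finset

theorem exists_coloring_ne_of_card_earlier_le {V : Type*} [LinearOrder V] {k : ℕ}
    (earlier : V → Finset V) (s : Finset V)
    (hlt : ∀ v ∈ s, ∀ w ∈ earlier v, w < v) (hcard : ∀ v ∈ s, #(earlier v) ≤ k) :
    ∃ c : V → Fin (k + 1), ∀ v ∈ s, ∀ w ∈ earlier v, c v ≠ c w := by
  induction s using Finset.induction_on_max with
  | empty => exact ⟨fun _ => 0, by simp⟩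
  | insert a s hsa ih =>
    obtain ⟨c, hc⟩ := ih (fun v hv => hlt v (mem_insert_of_mem hv))
      (fun v hv => hcard v (mem_insert_of_mem hv))
    have hfree : #((earlier a).image c) < #(univ : Finset (Fin (k + 1))) := by
      rw [card_univ, Fintype.card_fin]
      exact Nat.lt_succ_of_le (card_image_le.trans (hcard a (mem_insert_self a s)))
    obtain ⟨col, -, hcol⟩ := exists_mem_notMem_of_card_lt_card hfree
    have hearlier : ∀ w ∈ earlier a, w ≠ a := fun w hw =>
      (hlt a (mem_insert_self a s) w hw).ne
    refine ⟨Function.update c a col, fun v hv w hw => ?_⟩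
    rcases mem_insert.mp hv with rfl | hv
    · rw [Function.update_self, Function.update_of_ne (hearlier w hw)]
      exact fun h => hcol (h ▸ mem_image_of_mem c hw)
    · have hwv := hlt v (mem_insert_of_mem hv) w hw
      rw [Function.update_of_ne (hsa v hv).ne, Function.update_of_ne (hwv.trans (hsa v hv)).ne]
      exact hc v hv w hw

theorem card_sub_one_le_card_filter_exists_lt {α : Type*} [LinearOrder α] (s : Finset α) :
    #s - 1 ≤ #{v ∈ s | ∃ w ∈ s, w < v} := by
  rcases s.eq_empty_or_nonempty with rfl | hs
  · simp
  rw [← card_erase_of_mem (s.min'_mem hs)]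
  refine card_le_card fun v hv => ?_
  obtain ⟨hne, hvs⟩ := mem_erase.mp hv
  exact mem_filter.mpr ⟨hvs, s.min' hs, s.min'_mem hs, lt_of_le_of_ne (s.min'_le v hvs) hne.symm⟩

theorem exists_mem_forall_card_fiber_le {ι α : Type*} [Fintype ι] [DecidableEq α]
    (A : ι → Finset α) {d k : ℕ} (hd : 0 < d) (hA : ∀ i, d ≤ #(A i))
    (hload : ∀ a, #{i | a ∈ A i} ≤ k * d) :
    ∃ f : ι → α, (∀ i, f i ∈ A i) ∧ ∀ a, #{i | f i = a} ≤ k := by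
  -- `k` copies of each point: Hall's theorem then picks, for each `i`, a distinct copy.
  let T : ι → Finset (α × Fin k) := fun i => A i ×ˢ univ
  have hall : ∀ s : Finset ι, #s ≤ #(s.biUnion T) := by
    intro s
    have hbiUnion : s.biUnion T = s.biUnion A ×ˢ univ := by ext; simp [T]
    have hcount : #s * d ≤ #(s.biUnion A) * (k * d) := by
      refine card_mul_le_card_mul (fun i a => a ∈ A i) (fun i hi => (hA i).trans ?_)
        (fun a _ => (card_le_card ?_).trans (hload a))
      · rw [bipartiteAbove, filter_mem_eq_inter, inter_eq_right.mpr (subset_biUnion_of_mem A hi)]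
      · exact fun i hi => mem_filter.mpr ⟨mem_univ i, (mem_filter.mp hi).2⟩
    rw [hbiUnion, card_product, card_univ, Fintype.card_fin]
    exact Nat.le_of_mul_le_mul_right (by linarith) hd
  obtain ⟨F, hFinj, hFT⟩ := (all_card_le_biUnion_card_iff_existsInjective' T).mp hall
  refine ⟨fun i => (F i).1, fun i => (mem_product.mp (hFT i)).1, fun a => ?_⟩
  calc #{i | (F i).1 = a} ≤ #(univ : Finset (Fin k)) :=
        card_le_card_of_injOn (fun i => (F i).2) (fun _ _ => mem_coe.mpr (mem_univ _))
          fun i hi j hj hij => hFinj (Prod.ext (by simp_all) hij)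
    _ = k := by rw [card_univ, Fintype.card_fin]

theorem le_mul_sub_one_of_two_mul_le_mul {Δ δ k : ℕ} (hδ : 2 ≤ δ) (h : 2 * Δ ≤ k * δ) :
    Δ ≤ k * (δ - 1) := by
  obtain ⟨d, rfl⟩ := Nat.exists_eq_add_of_le hδ
  rw [show 2 + d - 1 = d + 1 by omega]
  -- if `k ≤ Δ` then `k (δ - 1) = k δ - k ≥ 2 Δ - Δ`, otherwise `k (δ - 1) ≥ k > Δ`
  rcases le_total k Δ with hk | hk <;> nlinarith

theorem exists_hypergraphProperColoring_of_card_fiber_le {V : Type*} [LinearOrder V]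
    (ℰ : Finset (Finset V)) (k : ℕ) (f g : ℰ → V) (hf : ∀ e, f e ∈ e.1) (hg : ∀ e, g e ∈ e.1)
    (hgf : ∀ e, g e < f e) (hfiber : ∀ v, #{e | f e = v} ≤ k) :
    ∃ c : V → Fin (k + 1), HypergraphProperColoring ℰ (k + 1) c := by
  have hlt : ∀ v ∈ univ.image f, ∀ w ∈ image g {e | f e = v}, w < v := by
    intro v _ w hw
    obtain ⟨e, he, rfl⟩ := mem_image.mp hw
    exact (mem_filter.mp he).2 ▸ hgf e
  obtain ⟨c, hc⟩ := exists_coloring_ne_of_card_earlier_le _ _ hlt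
    fun v _ => card_image_le.trans (hfiber v)
  refine ⟨c, fun e he => ⟨f ⟨e, he⟩, hf _, g ⟨e, he⟩, hg _, ?_⟩⟩
  exact hc _ (mem_image_of_mem f (mem_univ _)) _ (mem_image_of_mem g (by simp))

theorem hypergraph_proper_coloring_succ_ceil_general
    {V : Type*} [DecidableEq V]
    (ℰ : Finset (Finset V)) (Δ δ k : ℕ)
    (hδ : 2 ≤ δ)
    (hdeg : ∀ v : V, hypDegree ℰ v ≤ Δ)
    (hedge : ∀ e ∈ ℰ, δ ≤ e.card)
    (hk₁ : 2 * Δ ≤ k * δ) :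
    ∃ c : V → Fin (k + 1), HypergraphProperColoring ℰ (k + 1) c := by
  let : LinearOrder V := IsWellOrder.linearOrder WellOrderingRel
  let A : ℰ → Finset V := fun e => {v ∈ e.1 | ∃ w ∈ e.1, w < v}
  have hA : ∀ e, δ - 1 ≤ #(A e) := fun e =>
    (Nat.sub_le_sub_right (hedge e e.2) 1).trans (card_sub_one_le_card_filter_exists_lt e.1)
  have hload : ∀ v, #{e | v ∈ A e} ≤ k * (δ - 1) := fun v =>
    calc #{e | v ∈ A e} ≤ hypDegree ℰ v :=
          card_le_card_of_injOn Subtype.val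
            (fun e he => by simp_all [A]) Subtype.val_injective.injOn
      _ ≤ Δ := hdeg v
      _ ≤ k * (δ - 1) := le_mul_sub_one_of_two_mul_le_mul hδ hk₁
  obtain ⟨f, hfA, hfiber⟩ := exists_mem_forall_card_fiber_le A (by omega) hA hload
  choose hf g hg hgf using fun e => mem_filter.mp (hfA e)
  exact exists_hypergraphProperColoring_of_card_fiber_le ℰ k f g hf hg hgf
    fun v => by convert hfiber v

theorem hypergraph_proper_coloring_succ_ceil
    {V : Type*} [Fintype V] [DecidableEq V]
    (ℰ : Finset (Finset V)) (Δ δ k : ℕ)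
    (hδ : 2 ≤ δ)
    (hdeg : ∀ v : V, hypDegree ℰ v ≤ Δ)
    (hedge : ∀ e ∈ ℰ, δ ≤ e.card)
    (hk₁ : 2 * Δ ≤ k * δ)
    (hk₂ : ∀ m : ℕ, 2 * Δ ≤ m * δ → k ≤ m) :
    ∃ c : V → Fin (k + 1), HypergraphProperColoring ℰ (k + 1) c :=
  hypergraph_proper_coloring_succ_ceil_general ℰ Δ δ k hδ hdeg hedge hk₁
end

section
/- Let G be a finite simple graph with minimal vertex degree δ(G) ≥ 1 and maximal vertex degree Δ(G), and let k = ⌈2Δ(G)/δ(G)⌉ (the least natural number k with k·δ(G) ≥ 2Δ(G)). Then G admits a dynamic vertex coloring in k + 1 colors. -/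
/-!
Every vertex `v` of degree at least two picks two of its neighbours, and we colour properly the
graph joining the two picks of every vertex; then the picks of `v` see different colours.
Spreading two units of weight from each `v` evenly over its neighbours loads each vertex with
at most `2Δ/δ ≤ k`, so by Hall's theorem (in its flow form) the picks can be made so that every
vertex is picked by at most `k` vertices. The graph of picks then has maximum degree at most
`k`, and a greedy colouring uses `k + 1` colours.
-/

/-- A vertex coloring `c` of a simple graph `G` in `m` colors is dynamic if every
vertex of degree at least 2 has two neighbors receiving different colors. -/
def DynamicColoring {V : Type*} [Fintype V] (G : SimpleGraph V) [DecidableRel G.Adj]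
    (m : ℕ) (c : V → Fin m) : Prop :=
  ∀ v : V, 2 ≤ G.degree v →
    ∃ u ∈ G.neighborSet v, ∃ w ∈ G.neighborSet v, c u ≠ c w

open Finset

theorem mul_min_two_le_of_le_add {δ a b : ℕ} (h : δ ≤ a + b) :
    δ * min 2 (a + b) ≤ δ * a + 2 * b := by
  rcases le_total δ 2 with hδ | hδ
  · calc δ * min 2 (a + b) ≤ δ * (a + b) := Nat.mul_le_mul_left _ (min_le_right _ _)
      _ ≤ δ * a + 2 * b := by nlinarith
  · calc δ * min 2 (a + b) ≤ δ * 2 := Nat.mul_le_mul_left _ (min_le_left _ _)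
      _ ≤ 2 * (a + b) := by nlinarith
      _ ≤ δ * a + 2 * b := by nlinarith

section LoadBalancing

variable {κ α : Type*} [DecidableEq κ] [DecidableEq α] (N : κ → Finset α) (r : κ → ℕ) (c : α → ℕ)

/-- Slot `⟨o, j⟩` stands for the `j`-th element chosen for `o` and is matched to a pair
`⟨o, a⟩` with `a ∈ N o`. A pair `⟨o, a⟩` is matched to itself, unless a slot took it, in which
case it must take one of the `c a` copies `⟨a, j⟩` of `a`: this bounds the load of `a`. -/
def balancingGadget : (Σ o, Fin (r o)) ⊕ (Σ _ : κ, α) → Finset ((Σ _ : κ, α) ⊕ (Σ _ : α, ℕ))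
  | .inl s => (N s.1).image fun a => .inl ⟨s.1, a⟩
  | .inr d => insert (.inl d) ((range (c d.2)).image fun j => .inr ⟨d.2, j⟩)

theorem card_le_card_biUnion_balancingGadget
    (h : ∀ (O : Finset κ) (H : Finset α), ∑ o ∈ O, r o ≤ ∑ o ∈ O, #(N o \ H) + ∑ a ∈ H, c a)
    (A : Finset ((Σ o, Fin (r o)) ⊕ (Σ _ : κ, α))) :
    #A ≤ #(A.biUnion (balancingGadget N r c)) := by
  set O := A.toLeft.image Sigma.fst
  set D := A.toRight
  set H := D.image Sigma.snd
  set E := O.sigma fun o => N o \ H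
  set C := H.sigma fun a => range (c a)
  have hslots : #A.toLeft ≤ ∑ o ∈ O, r o :=
    calc #A.toLeft ≤ #(O.sigma fun o => (univ : Finset (Fin (r o)))) :=
          card_le_card fun s hs => mem_sigma.mpr ⟨mem_image_of_mem _ hs, mem_univ _⟩
      _ = ∑ o ∈ O, r o := by simp only [card_sigma, card_univ, Fintype.card_fin]
  have hED : Disjoint E D := disjoint_left.mpr fun d hdE hdD =>
    (mem_sdiff.mp (mem_sigma.mp hdE).2).2 (mem_image_of_mem _ hdD)
  have hsub : (E ∪ D).disjSum C ⊆ A.biUnion (balancingGadget N r c) := by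
    rintro (d | ⟨a, j⟩) hx
    · rcases mem_union.mp (inl_mem_disjSum.mp hx) with hdE | hdD
      · obtain ⟨hoO, haN⟩ := mem_sigma.mp hdE
        obtain ⟨s, hs, hso⟩ := mem_image.mp hoO
        refine mem_biUnion.mpr ⟨.inl s, mem_toLeft.mp hs, mem_image.mpr ⟨d.2, ?_, ?_⟩⟩
        · rw [hso]; exact (mem_sdiff.mp haN).1
        · rw [hso]
      · exact mem_biUnion.mpr ⟨.inr d, mem_toRight.mp hdD, mem_insert_self _ _⟩
    · obtain ⟨haH, hj⟩ := mem_sigma.mp (inr_mem_disjSum.mp hx)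
      obtain ⟨d, hdD, rfl⟩ := mem_image.mp haH
      exact mem_biUnion.mpr ⟨.inr d, mem_toRight.mp hdD,
        mem_insert_of_mem (mem_image_of_mem _ hj)⟩
  calc #A = #A.toLeft + #D := card_toLeft_add_card_toRight.symm
    _ ≤ #E + #D + #C := by
        have := h O H
        simp only [E, C, card_sigma, card_range]
        omega
    _ = #((E ∪ D).disjSum C) := by rw [card_disjSum, card_union_of_disjoint hED]
    _ ≤ _ := card_le_card hsub

/-- The hypothesis says that every cut of the network `source → o → a → sink`, with capacities
`r o`, `1` and `c a`, has capacity at least `∑ o, r o`. -/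
theorem exists_subsets_card_eq_of_forall_sum_le [Fintype κ]
    (h : ∀ (O : Finset κ) (H : Finset α), ∑ o ∈ O, r o ≤ ∑ o ∈ O, #(N o \ H) + ∑ a ∈ H, c a) :
    ∃ S : κ → Finset α,
      (∀ o, S o ⊆ N o ∧ #(S o) = r o) ∧ ∀ a, #({o | a ∈ S o} : Finset κ) ≤ c a := by
  obtain ⟨f, hf_inj, hf⟩ := (all_card_le_biUnion_card_iff_exists_injective
    (balancingGadget N r c)).mp (card_le_card_biUnion_balancingGadget N r c h)
  have hslot (s : Σ o, Fin (r o)) : ∃ a ∈ N s.1, f (.inl s) = .inl ⟨s.1, a⟩ := by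
    simpa [balancingGadget, eq_comm] using hf (.inl s)
  choose pick hpickN hpick using hslot
  refine ⟨fun o => univ.image fun j => pick ⟨o, j⟩, fun o => ⟨?_, ?_⟩, fun a => ?_⟩
  · exact image_subset_iff.mpr fun j _ => hpickN ⟨o, j⟩
  · rw [card_image_of_injective _ fun j j' hjj' => ?_, card_univ, Fintype.card_fin]
    have := hf_inj ((hpick ⟨o, j⟩).trans (hjj' ▸ (hpick ⟨o, j'⟩).symm))
    simpa using this
  · have hcap (o : κ) (ho : a ∈ univ.image fun j => pick ⟨o, j⟩) :
        f (.inr ⟨o, a⟩) ∈ (range (c a)).image fun j => .inr ⟨a, j⟩ := by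
      obtain ⟨j, -, rfl⟩ := mem_image.mp ho
      rcases mem_insert.mp (hf (.inr ⟨o, pick ⟨o, j⟩⟩)) with hself | hcopy
      · exact absurd (hf_inj (hself.trans (hpick ⟨o, j⟩).symm)) Sum.inr_ne_inl
      · exact hcopy
    calc #({o | a ∈ univ.image fun j => pick ⟨o, j⟩} : Finset κ)
        ≤ #((range (c a)).image fun j => (.inr ⟨a, j⟩ : (Σ _ : κ, α) ⊕ (Σ _ : α, ℕ))) :=
          card_le_card_of_injOn (fun o => f (.inr ⟨o, a⟩))
            (fun o ho => hcap o (mem_filter.mp ho).2) fun o _ o' _ hoo' => by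
              simpa using hf_inj hoo'
      _ ≤ c a := card_image_le.trans (card_range _).le

end LoadBalancing

namespace SimpleGraph

variable {κ V : Type*}

def cooccurrenceGraph (S : κ → Finset V) : SimpleGraph V where
  Adj x y := x ≠ y ∧ ∃ o, x ∈ S o ∧ y ∈ S o
  symm := ⟨fun _ _ ⟨hne, o, hx, hy⟩ => ⟨hne.symm, o, hy, hx⟩⟩
  loopless := ⟨fun _ h => h.1 rfl⟩

@[simp]
theorem cooccurrenceGraph_adj {S : κ → Finset V} {x y : V} :
    (cooccurrenceGraph S).Adj x y ↔ x ≠ y ∧ ∃ o, x ∈ S o ∧ y ∈ S o :=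
  Iff.rfl

theorem degree_cooccurrenceGraph_le [Fintype κ] [Fintype V] [DecidableEq V] (S : κ → Finset V)
    [DecidableRel (cooccurrenceGraph S).Adj] (hS : ∀ o, #(S o) ≤ 2) (x : V) :
    (cooccurrenceGraph S).degree x ≤ #({o | x ∈ S o} : Finset κ) := by
  set O : Finset κ := {o | x ∈ S o}
  have hsub : (cooccurrenceGraph S).neighborFinset x ⊆ O.biUnion fun o => (S o).erase x := by
    intro y hy
    obtain ⟨hne, o, hx, hy⟩ := cooccurrenceGraph_adj.mp ((mem_neighborFinset _ _ _).mp hy)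
    exact mem_biUnion.mpr ⟨o, mem_filter.mpr ⟨mem_univ _, hx⟩, mem_erase.mpr ⟨hne.symm, hy⟩⟩
  calc (cooccurrenceGraph S).degree x
      ≤ #(O.biUnion fun o => (S o).erase x) :=
        (card_neighborFinset_eq_degree _ x).symm.trans_le (card_le_card hsub)
    _ ≤ #O * 1 := card_biUnion_le_card_mul _ _ _ fun o ho => by
        have := card_erase_of_mem (mem_filter.mp ho).2
        have := hS o
        omega
    _ = #O := mul_one _

variable [Fintype V] (G : SimpleGraph V) [DecidableRel G.Adj]

theorem colorable_succ_of_forall_degree_le {k : ℕ} (h : ∀ v, G.degree v ≤ k) :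
    G.Colorable (k + 1) := by
  classical
  suffices ∀ s : Finset V, ∃ c : V → Fin (k + 1), ∀ x ∈ s, ∀ y ∈ s, G.Adj x y → c x ≠ c y by
    obtain ⟨c, hc⟩ := this univ
    exact ⟨Coloring.mk c fun hxy => hc _ (mem_univ _) _ (mem_univ _) hxy⟩
  intro s
  induction s using Finset.induction_on with
  | empty => exact ⟨fun _ => 0, by simp⟩
  | insert a s ha ih =>
    obtain ⟨c, hc⟩ := ih
    have hfree : #((G.neighborFinset a).image c) < #(univ : Finset (Fin (k + 1))) := by
      calc #((G.neighborFinset a).image c) ≤ G.degree a := card_image_le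
        _ < _ := by simpa using Nat.lt_succ_of_le (h a)
    obtain ⟨col, -, hcol⟩ := exists_mem_notMem_of_card_lt_card hfree
    have hcol' : ∀ y, G.Adj a y → c y ≠ col := fun y hy heq =>
      hcol (mem_image.mpr ⟨y, (G.mem_neighborFinset a y).mpr hy, heq⟩)
    refine ⟨Function.update c a col, fun x hx y hy hxy => ?_⟩
    rcases mem_insert.mp hx with rfl | hx <;> rcases mem_insert.mp hy with rfl | hy
    · exact absurd hxy (G.loopless.irrefl _)
    · rw [Function.update_self, Function.update_of_ne (G.ne_of_adj hxy).symm]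
      exact (hcol' y hxy).symm
    · rw [Function.update_self, Function.update_of_ne (G.ne_of_adj hxy)]
      exact hcol' x hxy.symm
    · rw [Function.update_of_ne (ne_of_mem_of_not_mem hx ha),
        Function.update_of_ne (ne_of_mem_of_not_mem hy ha)]
      exact hc x hx y hy hxy

theorem sum_card_neighborFinset_inter_le [DecidableEq V] (O H : Finset V) :
    ∑ v ∈ O, #(G.neighborFinset v ∩ H) ≤ G.maxDegree * #H :=
  calc ∑ v ∈ O, #(G.neighborFinset v ∩ H) = ∑ v ∈ O, #(H.bipartiteAbove G.Adj v) := by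
        congr! 2 with v; ext u; simp [mem_bipartiteAbove, and_comm]
    _ = ∑ u ∈ H, #(O.bipartiteBelow G.Adj u) := sum_card_bipartiteAbove_eq_sum_card_bipartiteBelow _
    _ ≤ ∑ _u ∈ H, G.maxDegree := sum_le_sum fun u _ => by
        refine (card_le_card fun v hv => ?_).trans (G.degree_le_maxDegree u)
        exact (G.mem_neighborFinset u v).mpr (mem_filter.mp hv).2.symm
    _ = G.maxDegree * #H := by rw [sum_const, smul_eq_mul, mul_comm]

theorem sum_min_two_degree_le [DecidableEq V] {k : ℕ} (hδ : 1 ≤ G.minDegree)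
    (hk : 2 * G.maxDegree ≤ k * G.minDegree) (O H : Finset V) :
    ∑ v ∈ O, min 2 (G.degree v) ≤ ∑ v ∈ O, #(G.neighborFinset v \ H) + ∑ _u ∈ H, k := by
  set δ := G.minDegree
  refine Nat.le_of_mul_le_mul_left ?_ hδ
  calc δ * ∑ v ∈ O, min 2 (G.degree v)
      ≤ ∑ v ∈ O, (δ * #(G.neighborFinset v \ H) + 2 * #(G.neighborFinset v ∩ H)) := by
        rw [mul_sum]
        refine sum_le_sum fun v _ => ?_
        rw [← card_neighborFinset_eq_degree, ← card_sdiff_add_card_inter _ H]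
        refine mul_min_two_le_of_le_add ?_
        rw [card_sdiff_add_card_inter, card_neighborFinset_eq_degree]
        exact G.minDegree_le_degree v
    _ ≤ δ * ∑ v ∈ O, #(G.neighborFinset v \ H) + 2 * (G.maxDegree * #H) := by
        rw [sum_add_distrib, ← mul_sum, ← mul_sum]
        gcongr
        exact G.sum_card_neighborFinset_inter_le O H
    _ ≤ δ * (∑ v ∈ O, #(G.neighborFinset v \ H) + ∑ _u ∈ H, k) := by
        rw [sum_const, smul_eq_mul]
        nlinarith

end SimpleGraph

theorem dynamic_coloring_succ_ceil_general
    {V : Type*} [Fintype V] (G : SimpleGraph V) [DecidableRel G.Adj] (k : ℕ)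
    (hδ : 1 ≤ G.minDegree)
    (hk₁ : 2 * G.maxDegree ≤ k * G.minDegree) :
    ∃ c : V → Fin (k + 1), DynamicColoring G (k + 1) c := by
  classical
  obtain ⟨S, hS, hload⟩ := exists_subsets_card_eq_of_forall_sum_le
    (fun v => G.neighborFinset v) (fun v => min 2 (G.degree v)) (fun _ => k)
    (G.sum_min_two_degree_le hδ hk₁)
  have hS_two (v : V) : #(S v) ≤ 2 := (hS v).2.trans_le (min_le_left _ _)
  obtain ⟨c⟩ := (SimpleGraph.cooccurrenceGraph S).colorable_succ_of_forall_degree_le fun x =>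
    (SimpleGraph.degree_cooccurrenceGraph_le S hS_two x).trans (hload x)
  refine ⟨c, fun v hv => ?_⟩
  obtain ⟨x, y, hxy, hSv⟩ := card_eq_two.mp ((hS v).2.trans (min_eq_left hv))
  have hx : x ∈ S v := by simp [hSv]
  have hy : y ∈ S v := by simp [hSv]
  exact ⟨x, (G.mem_neighborFinset v x).mp ((hS v).1 hx),
    y, (G.mem_neighborFinset v y).mp ((hS v).1 hy), c.valid ⟨hxy, v, hx, hy⟩⟩

theorem dynamic_coloring_succ_ceil
    {V : Type*} [Fintype V] (G : SimpleGraph V) [DecidableRel G.Adj] (k : ℕ)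
    (hδ : 1 ≤ G.minDegree)
    (hk₁ : 2 * G.maxDegree ≤ k * G.minDegree)
    (hk₂ : ∀ m : ℕ, 2 * G.maxDegree ≤ m * G.minDegree → k ≤ m) :
    ∃ c : V → Fin (k + 1), DynamicColoring G (k + 1) c :=
  dynamic_coloring_succ_ceil_general G k hδ hk₁
end

section
/- Let H be a hypergraph on a finite vertex set V such that every vertex has degree at most Δ and every hyperedge contains at least δ vertices, where δ ≥ 2. Let k = ⌈2Δ/δ⌉ (the least natural number k with k·δ ≥ 2Δ). Then there exists an image f of H such that every vertex has image-degree at most k under f. -/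
/-- `f` is an image of the hypergraph with hyperedge family `ℰ`: it assigns to every
hyperedge `e ∈ ℰ` a 2-element subset `f e ⊆ e`. -/
def IsImage {V : Type*} (ℰ : Finset (Finset V)) (f : Finset V → Finset V) : Prop :=
  ∀ e ∈ ℰ, f e ⊆ e ∧ (f e).card = 2

/-- The image-degree of a vertex `v` under `f`: the number of hyperedges `e ∈ ℰ`
with `v ∈ f e`. -/
def imageDegree {V : Type*} [DecidableEq V] (ℰ : Finset (Finset V))
    (f : Finset V → Finset V) (v : V) : ℕ :=
  (ℰ.filter (fun e => v ∈ f e)).card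

/-!
Take an image `f` minimising the total overload `∑ v, (deg_f v - k)` and suppose some vertex `x`
is overloaded. Trading a vertex of `f e` for one of `e \ f e`, repeated along a walk, moves one
unit of image-degree from the start of the walk to its end; so, by minimality, every vertex
reachable from `x` by such walks has image-degree at least `k`. The reachable set `R` contains
`e \ f e` as soon as it meets `f e`, which forces `|e| · |R ∩ f e| ≤ 2 |R ∩ e|` for every
hyperedge. Summing over the hyperedges,
`δ ∑_{v ∈ R} deg_f v ≤ 2 ∑_{v ∈ R} deg v ≤ 2Δ |R| ≤ kδ |R| < δ ∑_{v ∈ R} deg_f v`.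
-/

open Finset

section

variable {V : Type*}

theorem exists_isImage {ℰ : Finset (Finset V)} (h : ∀ e ∈ ℰ, 2 ≤ #e) : ∃ f, IsImage ℰ f := by
  have : ∀ e, ∃ s : Finset V, e ∈ ℰ → s ⊆ e ∧ #s = 2 := fun e => by
    by_cases he : e ∈ ℰ
    · exact (exists_subset_card_eq (h e he)).imp fun _ hs _ => hs
    · exact ⟨∅, fun he' => absurd he' he⟩
  choose f hf using this
  exact ⟨f, hf⟩

variable [DecidableEq V] {ℰ : Finset (Finset V)} {f : Finset V → Finset V}

theorem card_mul_card_inter_le {s e R : Finset V} (hse : s ⊆ e)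
    (hR : (R ∩ s).Nonempty → e \ s ⊆ R) : #e * #(R ∩ s) ≤ #s * #(R ∩ e) := by
  rcases (R ∩ s).eq_empty_or_nonempty with hRs | hRs
  · simp [hRs]
  have hcover : #(e \ s) + #(R ∩ s) ≤ #(R ∩ e) := by
    rw [← card_union_of_disjoint (disjoint_sdiff_self_left.mono_right inter_subset_right)]
    exact card_le_card (union_subset (subset_inter (hR hRs) sdiff_subset)
      (inter_subset_inter_left hse))
  have has : #(R ∩ s) ≤ #s := card_le_card inter_subset_right
  obtain ⟨d, hd⟩ := Nat.exists_eq_add_of_le (card_le_card hse)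
  rw [card_sdiff_of_subset hse, hd, Nat.add_sub_cancel_left] at hcover
  rw [hd]
  nlinarith [Nat.mul_le_mul_right d has]

theorem sum_imageDegree_eq_sum_card_inter (R : Finset V) (ℰ : Finset (Finset V))
    (f : Finset V → Finset V) : ∑ v ∈ R, imageDegree ℰ f v = ∑ e ∈ ℰ, #(R ∩ f e) := by
  simp_rw [imageDegree, ← filter_mem_eq_inter]
  exact sum_card_bipartiteAbove_eq_sum_card_bipartiteBelow (fun v e => v ∈ f e)

theorem sum_hypDegree_eq_sum_card_inter (R : Finset V) (ℰ : Finset (Finset V)) :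
    ∑ v ∈ R, hypDegree ℰ v = ∑ e ∈ ℰ, #(R ∩ e) :=
  sum_imageDegree_eq_sum_card_inter R ℰ id

theorem imageDegree_update_add {e : Finset V} (he : e ∈ ℰ) (s : Finset V) (v : V) :
    imageDegree ℰ (Function.update f e s) v + (if v ∈ f e then 1 else 0) =
      imageDegree ℰ f v + (if v ∈ s then 1 else 0) := by
  simp only [imageDegree, card_filter]
  rw [← add_sum_erase _ _ he, ← add_sum_erase _ _ he, Function.update_self,
    sum_congr rfl fun e' he' => by rw [Function.update_of_ne (ne_of_mem_erase he')]]
  omega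

def exchange (f : Finset V → Finset V) (e : Finset V) (x y : V) : Finset V → Finset V :=
  Function.update f e (insert y ((f e).erase x))

theorem IsImage.exchange {e : Finset V} (hf : IsImage ℰ f) (he : e ∈ ℰ) {x y : V} (hx : x ∈ f e)
    (hy : y ∈ e \ f e) : IsImage ℰ (exchange f e x y) := by
  intro e' he'
  rcases eq_or_ne e' e with rfl | hne
  · obtain ⟨hye, hyf⟩ := mem_sdiff.1 hy
    refine ⟨?_, ?_⟩ <;> simp only [_root_.exchange, Function.update_self]
    · exact insert_subset hye ((erase_subset _ _).trans (hf e' he').1)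
    · rw [card_insert_of_notMem fun h => hyf (mem_of_mem_erase h), card_erase_of_mem hx,
        (hf e' he').2]
  · simpa only [_root_.exchange, Function.update_of_ne hne] using hf e' he'

theorem imageDegree_exchange_add {e : Finset V} (he : e ∈ ℰ) {x y : V} (hx : x ∈ f e)
    (hy : y ∉ f e) (v : V) :
    imageDegree ℰ (exchange f e x y) v + (if v = x then 1 else 0) =
      imageDegree ℰ f v + (if v = y then 1 else 0) := by
  have h := imageDegree_update_add (f := f) he (insert y ((f e).erase x)) v
  rw [← exchange] at h
  by_cases hvx : v = x <;> by_cases hvy : v = y <;> subst_vars <;>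
    simp_all [mem_insert, mem_erase]

-- `es` lists the hyperedges used, the most recent first.
inductive ExchangeWalk (ℰ : Finset (Finset V)) (f : Finset V → Finset V) (x : V) :
    V → List (Finset V) → Prop
  | refl : ExchangeWalk ℰ f x x []
  | tail {y z : V} {e : Finset V} {es : List (Finset V)} :
      ExchangeWalk ℰ f x y es → e ∈ ℰ → y ∈ f e → z ∈ e \ f e → ExchangeWalk ℰ f x z (e :: es)

namespace ExchangeWalk

variable {x y z : V} {e : Finset V} {es : List (Finset V)}

theorem shortcut (hw : ExchangeWalk ℰ f x y es) (he : e ∈ es) (hz : z ∈ e \ f e) :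
    ∃ es', ExchangeWalk ℰ f x z es' ∧ es'.length ≤ es.length := by
  induction hw with
  | refl => simp at he
  | tail hw he' hy _ ih =>
    rcases List.mem_cons.1 he with rfl | he
    · exact ⟨_, hw.tail he' hy hz, le_rfl⟩
    · obtain ⟨es', hw', hlen⟩ := ih he
      exact ⟨es', hw', hlen.trans (Nat.le_succ _)⟩

theorem congr {g : Finset V → Finset V} (hw : ExchangeWalk ℰ f x y es)
    (hfg : ∀ e ∈ es, g e = f e) : ExchangeWalk ℰ g x y es := by
  induction hw with
  | refl => exact refl
  | @tail _ _ e _ _ he hy hz ih =>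
    have hge : g e = f e := hfg e List.mem_cons_self
    exact (ih fun e' he' => hfg e' (List.mem_cons_of_mem _ he')).tail he (hge ▸ hy) (hge ▸ hz)

theorem exists_shift (hf : IsImage ℰ f) (hw : ExchangeWalk ℰ f x y es) :
    ∃ g, IsImage ℰ g ∧ ∀ v, imageDegree ℰ g v + (if v = x then 1 else 0) =
      imageDegree ℰ f v + (if v = y then 1 else 0) := by
  induction hn : es.length using Nat.strong_induction_on generalizing f y es with
  | _ n ih =>
  cases hw with
  | refl => exact ⟨f, hf, fun v => rfl⟩
  | @tail w _ e es hw he hw_mem hy =>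
    subst hn
    by_cases hes : e ∈ es
    · -- a walk that reuses `e` can jump straight to `y` through `e`
      obtain ⟨es', hw', hlen⟩ := hw.shortcut hes hy
      exact ih _ (by rw [List.length_cons]; omega) hf hw' rfl
    · have hw' : ExchangeWalk ℰ (exchange f e w y) x w es :=
        hw.congr fun e' he' => Function.update_of_ne (ne_of_mem_of_not_mem he' hes) _ _
      obtain ⟨g, hg, hshift⟩ := ih _ (by simp) (hf.exchange he hw_mem hy) hw' rfl
      exact ⟨g, hg, fun v =>
        (hshift v).trans (imageDegree_exchange_add he hw_mem (mem_sdiff.1 hy).2 v)⟩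

end ExchangeWalk

theorem mul_sum_imageDegree_le_mul_sum_hypDegree {δ : ℕ} {R : Finset V} (hf : IsImage ℰ f)
    (hedge : ∀ e ∈ ℰ, δ ≤ #e) (hR : ∀ e ∈ ℰ, (R ∩ f e).Nonempty → e \ f e ⊆ R) :
    δ * ∑ v ∈ R, imageDegree ℰ f v ≤ 2 * ∑ v ∈ R, hypDegree ℰ v := by
  calc δ * ∑ v ∈ R, imageDegree ℰ f v = ∑ e ∈ ℰ, δ * #(R ∩ f e) := by
        rw [sum_imageDegree_eq_sum_card_inter, mul_sum]
    _ ≤ ∑ e ∈ ℰ, 2 * #(R ∩ e) := sum_le_sum fun e he => calc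
        δ * #(R ∩ f e) ≤ #e * #(R ∩ f e) := Nat.mul_le_mul_right _ (hedge e he)
        _ ≤ #(f e) * #(R ∩ e) := card_mul_card_inter_le (hf e he).1 (hR e he)
        _ = 2 * #(R ∩ e) := by rw [(hf e he).2]
    _ = 2 * ∑ v ∈ R, hypDegree ℰ v := by
        rw [← mul_sum, sum_hypDegree_eq_sum_card_inter]

variable [Fintype V]

-- Truncated subtraction: only vertices of image-degree above `k` contribute.
def overload (ℰ : Finset (Finset V)) (k : ℕ) (f : Finset V → Finset V) : ℕ :=
  ∑ v, (imageDegree ℰ f v - k)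

theorem le_imageDegree_of_exchangeWalk {k : ℕ} {x y : V} {es : List (Finset V)}
    (hf : IsImage ℰ f) (hmin : ∀ g, IsImage ℰ g → overload ℰ k f ≤ overload ℰ k g)
    (hx : k < imageDegree ℰ f x) (hw : ExchangeWalk ℰ f x y es) : k ≤ imageDegree ℰ f y := by
  by_contra! hy
  obtain ⟨g, hg, hshift⟩ := hw.exists_shift hf
  have hlt : overload ℰ k g < overload ℰ k f := by
    refine sum_lt_sum (fun v _ => ?_) ⟨x, mem_univ x, ?_⟩
    · have := hshift v
      split_ifs at this <;> subst_vars <;> omega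
    · have hxy : x ≠ y := by rintro rfl; omega
      have := hshift x
      rw [if_pos rfl, if_neg hxy] at this
      omega
  exact (hmin g hg).not_gt hlt

end

theorem exists_image_of_small_degree_general
    {V : Type*} [Fintype V] [DecidableEq V]
    (ℰ : Finset (Finset V)) (Δ δ k : ℕ)
    (hδ : 2 ≤ δ)
    (hdeg : ∀ v : V, hypDegree ℰ v ≤ Δ)
    (hedge : ∀ e ∈ ℰ, δ ≤ e.card)
    (hk₁ : 2 * Δ ≤ k * δ) :
    ∃ f : Finset V → Finset V, IsImage ℰ f ∧ ∀ v : V, imageDegree ℰ f v ≤ k := by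
  classical
  obtain ⟨f, hf, hmin⟩ := (measure (overload ℰ k)).wf.has_min {f | IsImage ℰ f}
    (exists_isImage fun e he => hδ.trans (hedge e he))
  refine ⟨f, hf, fun x => not_lt.1 fun hx => ?_⟩
  set R := univ.filter fun y => ∃ es, ExchangeWalk ℰ f x y es
  have hR : ∀ e ∈ ℰ, (R ∩ f e).Nonempty → e \ f e ⊆ R := by
    rintro e he ⟨y, hy⟩ z hz
    obtain ⟨es, hw⟩ := (mem_filter.1 (mem_inter.1 hy).1).2
    exact mem_filter.2 ⟨mem_univ z, _, hw.tail he (mem_inter.1 hy).2 hz⟩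
  have hload : #R * k < ∑ y ∈ R, imageDegree ℰ f y := by
    rw [← smul_eq_mul, ← sum_const]
    refine sum_lt_sum (fun y hy => ?_) ⟨x, mem_filter.2 ⟨mem_univ x, [], .refl⟩, hx⟩
    obtain ⟨es, hw⟩ := (mem_filter.1 hy).2
    exact le_imageDegree_of_exchangeWalk hf (fun g hg => not_lt.1 (hmin g hg)) hx hw
  have hcount := mul_sum_imageDegree_le_mul_sum_hypDegree hf hedge hR
  have hdegR : ∑ y ∈ R, hypDegree ℰ y ≤ #R * Δ := sum_le_card_nsmul R _ Δ fun y _ => hdeg y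
  nlinarith [Nat.mul_le_mul_left #R hk₁]

theorem exists_image_of_small_degree
    {V : Type*} [Fintype V] [DecidableEq V]
    (ℰ : Finset (Finset V)) (Δ δ k : ℕ)
    (hδ : 2 ≤ δ)
    (hdeg : ∀ v : V, hypDegree ℰ v ≤ Δ)
    (hedge : ∀ e ∈ ℰ, δ ≤ e.card)
    (hk₁ : 2 * Δ ≤ k * δ)
    (hk₂ : ∀ m : ℕ, 2 * Δ ≤ m * δ → k ≤ m) :
    ∃ f : Finset V → Finset V, IsImage ℰ f ∧ ∀ v : V, imageDegree ℰ f v ≤ k :=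
  exists_image_of_small_degree_general ℰ Δ δ k hδ hdeg hedge hk₁
end

section
/- Let H be a hypergraph on a finite vertex set V, let f be an image of H, let k be a natural number, let S be the set of vertices of image-degree at least k + 1 under f, and let U be the set of all vertices reachable from S by alternating chains (in particular S ⊆ U). If e ∈ ℰ is a hyperedge with both vertices of f(e) belonging to U, then e ⊆ U. -/
/-- An alternating chain `a 0, b 0, a 1, b 1, …, a n` of length `n` for the image `f`:
there are pairwise distinct hyperedges `es 0, …, es (n-1) ∈ ℰ` such that for each
`i < n` the vertices `a i, b i, a (i+1)` are pairwise distinct, `f (es i) = {a i, b i}`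
and `a (i+1) ∈ es i`. -/
def IsAltChain {V : Type*} [DecidableEq V] (ℰ : Finset (Finset V))
    (f : Finset V → Finset V) (n : ℕ) (a b : ℕ → V) (es : ℕ → Finset V) : Prop :=
  (∀ i < n, ∀ j < n, es i = es j → i = j) ∧
  ∀ i < n,
    es i ∈ ℰ ∧ a i ≠ b i ∧ a i ≠ a (i + 1) ∧ b i ≠ a (i + 1) ∧
    f (es i) = {a i, b i} ∧ a (i + 1) ∈ es i

/-- `y` is reachable from the set `X` by alternating chains (chains of length 0
are allowed). -/
def AltReachable {V : Type*} [DecidableEq V] (ℰ : Finset (Finset V))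
    (f : Finset V → Finset V) (X : Set V) (y : V) : Prop :=
  ∃ (n : ℕ) (a b : ℕ → V) (es : ℕ → Finset V),
    IsAltChain ℰ f n a b es ∧ a 0 ∈ X ∧ a n = y

section

variable {V : Type*} [DecidableEq V] {ℰ : Finset (Finset V)} {f : Finset V → Finset V}

namespace IsAltChain

variable {n : ℕ} {a b : ℕ → V} {es : ℕ → Finset V}

theorem of_le (h : IsAltChain ℰ f n a b es) {m : ℕ} (hmn : m ≤ n) : IsAltChain ℰ f m a b es :=
  ⟨fun i hi j hj => h.1 i (by omega) j (by omega), fun i hi => h.2 i (by omega)⟩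

theorem snoc (h : IsAltChain ℰ f n a b es) {e : Finset V} {y w : V}
    (he : e ∈ ℰ) (hfresh : ∀ i < n, es i ≠ e) (hfe : f e = {a n, y}) (hy : a n ≠ y)
    (hwa : a n ≠ w) (hwy : y ≠ w) (hw : w ∈ e) :
    IsAltChain ℰ f (n + 1) (Function.update a (n + 1) w) (Function.update b n y)
      (Function.update es n e) := by
  refine ⟨fun i hi j hj hij => ?_, fun i hi => ?_⟩
  · rcases Nat.lt_succ_iff_lt_or_eq.1 hi with hi | rfl <;>
      rcases Nat.lt_succ_iff_lt_or_eq.1 hj with hj | rfl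
    · simp only [Function.update_of_ne hi.ne, Function.update_of_ne hj.ne] at hij
      exact h.1 i hi j hj hij
    · simp only [Function.update_of_ne hi.ne, Function.update_self] at hij
      exact absurd hij (hfresh i hi)
    · simp only [Function.update_of_ne hj.ne, Function.update_self] at hij
      exact absurd hij.symm (hfresh j hj)
    · rfl
  · rcases Nat.lt_succ_iff_lt_or_eq.1 hi with hi | rfl
    · simp only [Function.update_of_ne hi.ne, Function.update_of_ne (by omega : i ≠ n + 1),
        Function.update_of_ne (by omega : i + 1 ≠ n + 1)]
      exact h.2 i hi
    · simp only [Function.update_self, Function.update_of_ne (by omega : i ≠ i + 1)]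
      exact ⟨he, hy, hwa, hwy, hfe, hw⟩

end IsAltChain

theorem AltReachable.of_mem_edge {X : Set V} {x y w : V} {e : Finset V}
    (hx : AltReachable ℰ f X x) (he : e ∈ ℰ) (hfe : f e = {x, y}) (hxy : x ≠ y)
    (hw : w ∈ e) (hwf : w ∉ f e) : AltReachable ℰ f X w := by
  obtain ⟨n, a, b, es, hchain, ha0, rfl⟩ := hx
  have hne : ∀ {u}, u ∈ f e → u ≠ w := fun hu hwu => hwf (hwu ▸ hu)
  by_cases hused : ∃ i < n, es i = e
  · -- `e` is already used at step `i`: cut the chain there and leave `e` towards `w` instead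
    obtain ⟨i, hi, rfl⟩ := hused
    obtain ⟨-, hab, -, -, hfi, -⟩ := hchain.2 i hi
    have hfresh : ∀ j < i, es j ≠ es i := fun j hj hji => by
      have := hchain.1 j (by omega) i hi hji; omega
    have hsnoc := (hchain.of_le hi.le).snoc (hchain.2 i hi).1 hfresh hfi hab
      (hne (by simp [hfi])) (hne (by simp [hfi])) hw
    rw [Function.update_eq_self, Function.update_eq_self] at hsnoc
    exact ⟨i + 1, _, _, _, hsnoc, by simpa using ha0, Function.update_self ..⟩
  · push Not at hused
    exact ⟨n + 1, _, _, _, hchain.snoc he hused hfe hxy (hne (by simp [hfe]))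
      (hne (by simp [hfe])) hw, by simpa using ha0, Function.update_self ..⟩

end

theorem edge_inside_U_of_image_inside_U_general
    {V : Type*} [DecidableEq V]
    (ℰ : Finset (Finset V)) (f : Finset V → Finset V)
    (hf : IsImage ℰ f)
    (S : Set V)
    (U : Set V) (hU : U = {y : V | AltReachable ℰ f S y})
    (e : Finset V) (he : e ∈ ℰ)
    (hfe : ∀ u ∈ f e, u ∈ U) :
    ∀ w ∈ e, w ∈ U := by
  subst hU
  intro w hw
  by_cases hwf : w ∈ f e
  · exact hfe w hwf
  obtain ⟨x, y, hxy, hfxy⟩ := Finset.card_eq_two.1 (hf e he).2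
  exact AltReachable.of_mem_edge (hfe x (by simp [hfxy])) he hfxy hxy hw hwf

theorem edge_inside_U_of_image_inside_U
    {V : Type*} [Fintype V] [DecidableEq V]
    (ℰ : Finset (Finset V)) (f : Finset V → Finset V)
    (hf : IsImage ℰ f) (k : ℕ)
    (S : Set V) (hS : S = {v : V | k + 1 ≤ imageDegree ℰ f v})
    (U : Set V) (hU : U = {y : V | AltReachable ℰ f S y})
    (e : Finset V) (he : e ∈ ℰ)
    (hfe : ∀ u ∈ f e, u ∈ U) :
    ∀ w ∈ e, w ∈ U :=
  edge_inside_U_of_image_inside_U_general ℰ f hf S U hU e he hfe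
end

section
/- Let H be a hypergraph on a finite vertex set V in which every hyperedge contains at least 2 vertices, and let k be a natural number. Let f be an image of H that minimizes s_{k+1}, i.e. for every image f' of H, s_{k+1}(f) ≤ s_{k+1}(f'), where s_{k+1}(g) denotes the sum of image-degrees under g over all vertices of image-degree at least k + 1 under g. Let S be the set of vertices of image-degree at least k + 1 under f, and let U be the set of all vertices reachable from S by alternating chains. Then every vertex of U has image-degree at least k under f. -/
/-- The sum of image-degrees under `f` over all vertices of image-degree at least
`k + 1` under `f`. -/
def bigDegSum {V : Type*} [Fintype V] [DecidableEq V] (ℰ : Finset (Finset V))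
    (f : Finset V → Finset V) (k : ℕ) : ℕ :=
  ∑ v ∈ Finset.univ.filter (fun v => k + 1 ≤ imageDegree ℰ f v), imageDegree ℰ f v

/-!
If some `u ∈ U` had image-degree below `k`, take an alternating chain `a₀, b₀, …, aₙ = u`
with `a₀ ∈ S` and re-orient it, replacing `f eᵢ = {aᵢ, bᵢ}` by `{aᵢ₊₁, bᵢ}`. Every interior
vertex loses and gains one unit, so the only changes are that `a₀` loses one unit of degree and
`u` gains one. Since `a₀` had degree at least `k + 1` and `u` still has degree at most `k`, this
strictly decreases `s_{k+1}`, contradicting minimality.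
-/

open Finset

section Reorientation

variable {V : Type*} [DecidableEq V] {ℰ : Finset (Finset V)}

theorem IsImage.update {f : Finset V → Finset V} (hf : IsImage ℰ f) {e s : Finset V}
    (hs : s ⊆ e) (hcard : s.card = 2) : IsImage ℰ (Function.update f e s) := by
  intro e' he'
  rcases eq_or_ne e' e with rfl | hne
  · simpa using ⟨hs, hcard⟩
  · simpa [Function.update_of_ne hne] using hf e' he'

theorem imageDegree_update (f : Finset V → Finset V) {e : Finset V} (he : e ∈ ℰ)
    (s : Finset V) (v : V) :
    (imageDegree ℰ (Function.update f e s) v : ℤ) =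
      imageDegree ℰ f v - (if v ∈ f e then 1 else 0) + (if v ∈ s then 1 else 0) := by
  have hrest : ∀ e' ∈ ℰ.erase e,
      (if v ∈ Function.update f e s e' then 1 else 0) = (if v ∈ f e' then 1 else 0) :=
    fun e' he' => by rw [Function.update_of_ne (ne_of_mem_erase he')]
  simp only [imageDegree, card_filter, ← add_sum_erase ℰ _ he, sum_congr rfl hrest,
    Function.update_self]
  push_cast
  ring

theorem ite_mem_pair_sub_ite_mem_pair {a b c v : V} (hab : a ≠ b) (hcb : c ≠ b) :
    ((if v ∈ ({c, b} : Finset V) then 1 else 0) : ℤ) -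
        (if v ∈ ({a, b} : Finset V) then 1 else 0) =
      (if v = c then 1 else 0) - (if v = a then 1 else 0) := by
  by_cases hv : v = b
  · subst hv
    simp [hab.symm, hcb.symm]
  · simp [hv]

def shiftAlong (f : Finset V → Finset V) (a b : ℕ → V) (es : ℕ → Finset V) :
    ℕ → Finset V → Finset V
  | 0 => f
  | i + 1 => Function.update (shiftAlong f a b es i) (es i) {a (i + 1), b i}

theorem shiftAlong_apply_of_forall_ne {f : Finset V → Finset V} {a b : ℕ → V}
    {es : ℕ → Finset V} {i : ℕ} {e : Finset V} (h : ∀ j < i, es j ≠ e) :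
    shiftAlong f a b es i e = f e := by
  induction i with
  | zero => rfl
  | succ i ih =>
    rw [shiftAlong, Function.update_of_ne (h i i.lt_succ_self).symm,
      ih fun j hj => h j (by omega)]

theorem IsAltChain.shiftAlong_spec {f : Finset V → Finset V} {n : ℕ} {a b : ℕ → V}
    {es : ℕ → Finset V} (hc : IsAltChain ℰ f n a b es) (hf : IsImage ℰ f) {i : ℕ}
    (hi : i ≤ n) :
    IsImage ℰ (shiftAlong f a b es i) ∧
      ∀ v, (imageDegree ℰ (shiftAlong f a b es i) v : ℤ) =
        imageDegree ℰ f v + (if v = a i then 1 else 0) - (if v = a 0 then 1 else 0) := by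
  induction i with
  | zero => exact ⟨hf, fun v => by simp [shiftAlong]⟩
  | succ i ih =>
    obtain ⟨himg, hdeg⟩ := ih (by omega)
    obtain ⟨he, hab, -, hba, hfe, hmem⟩ := hc.2 i (by omega)
    have hfresh : shiftAlong f a b es i (es i) = {a i, b i} := by
      refine (shiftAlong_apply_of_forall_ne fun j hj hji => ?_).trans hfe
      have := hc.1 j (by omega) i (by omega) hji
      omega
    have hb : b i ∈ es i := (hf _ he).1 (by simp [hfe])
    refine ⟨himg.update (insert_subset hmem (singleton_subset_iff.2 hb)) (card_pair hba.symm),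
      fun v => ?_⟩
    have := ite_mem_pair_sub_ite_mem_pair (v := v) hab hba.symm
    rw [shiftAlong, imageDegree_update _ he, hfresh, hdeg v]
    linarith

theorem bigDegSum_lt_of_move [Fintype V] {f g : Finset V → Finset V} {k : ℕ} {x y : V}
    (hdeg : ∀ v, (imageDegree ℰ g v : ℤ) =
      imageDegree ℰ f v + (if v = y then 1 else 0) - (if v = x then 1 else 0))
    (hx : k + 1 ≤ imageDegree ℰ f x) (hy : imageDegree ℰ f y < k) :
    bigDegSum ℰ g k < bigDegSum ℰ f k := by
  have hxy : x ≠ y := by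
    rintro rfl
    omega
  rw [bigDegSum, bigDegSum, sum_filter, sum_filter]
  refine sum_lt_sum (fun v _ => ?_) ⟨x, mem_univ x, ?_⟩
  · have := hdeg v
    split_ifs at this with h₁ h₂ h₂ <;> subst_vars <;> split_ifs <;> omega
  · have := hdeg x
    rw [if_neg hxy, if_pos rfl] at this
    split_ifs <;> omega

end Reorientation

theorem degree_in_U_ge_of_minimal_image_general
    {V : Type*} [Fintype V] [DecidableEq V]
    (ℰ : Finset (Finset V))
    (k : ℕ)
    (f : Finset V → Finset V) (hf : IsImage ℰ f)
    (hmin : ∀ f' : Finset V → Finset V, IsImage ℰ f' →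
      bigDegSum ℰ f k ≤ bigDegSum ℰ f' k)
    (S : Set V) (hS : S = {x : V | k + 1 ≤ imageDegree ℰ f x})
    (U : Set V) (hU : U = {y : V | AltReachable ℰ f S y}) :
    ∀ u ∈ U, k ≤ imageDegree ℰ f u := by
  subst hS hU
  rintro u ⟨n, a, b, es, hc, ha₀, rfl⟩
  by_contra! hu
  obtain ⟨himg, hdeg⟩ := hc.shiftAlong_spec hf le_rfl
  exact (hmin _ himg).not_gt (bigDegSum_lt_of_move hdeg ha₀ hu)

theorem degree_in_U_ge_of_minimal_image
    {V : Type*} [Fintype V] [DecidableEq V]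
    (ℰ : Finset (Finset V))
    (hedge : ∀ e ∈ ℰ, 2 ≤ e.card)
    (k : ℕ)
    (f : Finset V → Finset V) (hf : IsImage ℰ f)
    (hmin : ∀ f' : Finset V → Finset V, IsImage ℰ f' →
      bigDegSum ℰ f k ≤ bigDegSum ℰ f' k)
    (S : Set V) (hS : S = {x : V | k + 1 ≤ imageDegree ℰ f x})
    (U : Set V) (hU : U = {y : V | AltReachable ℰ f S y}) :
    ∀ u ∈ U, k ≤ imageDegree ℰ f u :=
  degree_in_U_ge_of_minimal_image_general ℰ k f hf hmin S hS U hU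
end
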